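/- For all integers b and c, the group G(1,b,c) = ⟨x, y | (xy) x^b, (xy) y^c⟩ is isomorphic to the cyclic group ℤ/(bc + b + c)ℤ, i.e., to `ZMod (b*c + b + c).natAbs`; in particular it is trivial if and only if bc + b + c = 1 or bc + b + c = −1. -/

import Mathlib

/-- The group `G(1,b,c) = ⟨x, y | (xy) x^b, (xy) y^c⟩`. -/
abbrev G1 (b c : ℤ) : Type :=
  PresentedGroup ({(FreeGroup.of 0 * FreeGroup.of 1) * (FreeGroup.of 0) ^ b,
    (FreeGroup.of 0 * FreeGroup.of 1) * (FreeGroup.of 1) ^ c} : Set (FreeGroup (Fin 2)))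

namespace Stmt6Aux

variable (b c : ℤ)

local notation "rels" => ({(FreeGroup.of 0 * FreeGroup.of 1) * (FreeGroup.of 0) ^ b,
    (FreeGroup.of 0 * FreeGroup.of 1) * (FreeGroup.of 1) ^ c} : Set (FreeGroup (Fin 2)))

lemma rel_one {r : FreeGroup (Fin 2)} (hr : r ∈ rels) : PresentedGroup.mk rels r = 1 := by
  have : r ∈ Subgroup.normalClosure rels := Subgroup.subset_normalClosure hr
  exact (QuotientGroup.eq_one_iff r).mpr this

lemma rel1 : (PresentedGroup.of 0 * PresentedGroup.of 1 : G1 b c) * (PresentedGroup.of 0) ^ b = 1 := by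
  have := rel_one b c (r := (FreeGroup.of 0 * FreeGroup.of 1) * (FreeGroup.of 0) ^ b)
    (Set.mem_insert _ _)
  simpa [PresentedGroup.of] using this

lemma rel2 : (PresentedGroup.of 0 * PresentedGroup.of 1 : G1 b c) * (PresentedGroup.of 1) ^ c = 1 := by
  have := rel_one b c (r := (FreeGroup.of 0 * FreeGroup.of 1) * (FreeGroup.of 1) ^ c)
    (Set.mem_insert_of_mem _ rfl)
  simpa [PresentedGroup.of] using this

lemma y_eq : (PresentedGroup.of 1 : G1 b c) = (PresentedGroup.of 0) ^ (-(b+1)) := by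
  have h := rel1 b c
  calc (PresentedGroup.of 1 : G1 b c)
      = (PresentedGroup.of 0)⁻¹ * (PresentedGroup.of 0 * PresentedGroup.of 1
          * (PresentedGroup.of 0) ^ b) * ((PresentedGroup.of 0) ^ b)⁻¹ := by group
    _ = (PresentedGroup.of 0)⁻¹ * 1 * ((PresentedGroup.of 0) ^ b)⁻¹ := by rw [h]
    _ = (PresentedGroup.of 0) ^ (-(b+1)) := by group

lemma x_pow : (PresentedGroup.of 0 : G1 b c) ^ (b*c+b+c) = 1 := by
  have h2 := rel2 b c
  rw [y_eq b c] at h2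
  have h3 : (PresentedGroup.of 0 : G1 b c) ^ (-(b*c+b+c)) = 1 := by
    rw [← h2]; group
  have := congrArg Inv.inv h3
  simpa [← zpow_neg] using this

end Stmt6Aux

namespace Stmt6Aux

set_option linter.unusedTactic false in
noncomputable def theEquiv : G1 b c ≃* Multiplicative (ZMod (b * c + b + c).natAbs) := by
  set n : ℤ := b * c + b + c with hn
  set N : ℕ := n.natAbs with hN
  have hn0 : ((n : ℤ) : ZMod N) = 0 :=
    (ZMod.intCast_zmod_eq_zero_iff_dvd n N).mpr (Int.natAbs_dvd.mpr dvd_rfl)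
  set f : Fin 2 → Multiplicative (ZMod N) := fun i =>
    Multiplicative.ofAdd (if i = 0 then (1 : ZMod N) else ((-(b+1) : ℤ) : ZMod N)) with hf
  have hrels : ∀ r ∈ ({(FreeGroup.of 0 * FreeGroup.of 1) * (FreeGroup.of 0) ^ b,
      (FreeGroup.of 0 * FreeGroup.of 1) * (FreeGroup.of 1) ^ c} : Set (FreeGroup (Fin 2))),
      FreeGroup.lift f r = 1 := by
    have key : ∀ r : ZMod N, r = 0 → Multiplicative.ofAdd r = 1 := by
      rintro r rfl; rfl
    have hn0' : ((b*c+b+c : ℤ) : ZMod N) = 0 := by rw [← hn]; exact hn0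
    push_cast at hn0'
    rintro r (rfl | rfl) <;>
      simp only [map_mul, map_zpow, FreeGroup.lift_apply_of, hf, if_pos,
        if_neg (by decide : ¬(1:Fin 2) = 0)] <;>
      rw [← ofAdd_zsmul, ← ofAdd_add, ← ofAdd_add] <;>
      apply key <;>
      rw [zsmul_eq_mul] <;>
      push_cast
    · ring
    · linear_combination -hn0' 
  set x : G1 b c := PresentedGroup.of 0 with hx
  have hxN : ((N : ℤ)) • Additive.ofMul x = 0 := by
    have hxn : x ^ n = 1 := x_pow b c
    have : x ^ ((N : ℤ)) = 1 := by
      rcases Int.natAbs_eq n with h | h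
      · rw [← h]; exact hxn
      · rw [show ((N:ℤ)) = -n by omega, zpow_neg, hxn, inv_one]
    exact this
  set g : ZMod N →+ Additive (G1 b c) :=
    ZMod.lift N ⟨zmultiplesHom (Additive (G1 b c)) (Additive.ofMul x), by simpa using hxN⟩ with hg
  set φ : G1 b c →* Multiplicative (ZMod N) := PresentedGroup.toGroup hrels with hφ
  set ψ : Multiplicative (ZMod N) →* G1 b c := AddMonoidHom.toMultiplicativeLeft g with hψ
  have hψ_int : ∀ k : ℤ, ψ (Multiplicative.ofAdd ((k : ZMod N))) = x ^ k := by
    intro k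
    show Additive.toMul (g ((k : ZMod N))) = x ^ k
    rw [hg, ZMod.lift_coe]
    rfl
  have hφx : φ x = Multiplicative.ofAdd (1 : ZMod N) := by
    rw [hφ, hx]; exact PresentedGroup.toGroup.of hrels
  refine MonoidHom.toMulEquiv φ ψ ?_ ?_
  · apply PresentedGroup.ext
    intro i
    fin_cases i
    · show ψ (φ x) = x
      rw [hφx, show (1 : ZMod N) = ((1:ℤ) : ZMod N) by push_cast; ring, hψ_int, zpow_one]
    · show ψ (φ (PresentedGroup.of 1)) = PresentedGroup.of 1
      rw [hφ, PresentedGroup.toGroup.of hrels, hf]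
      simp only [if_neg (by decide : ¬(1:Fin 2) = 0)]
      rw [hψ_int, hx]
      exact (y_eq b c).symm
  · refine MonoidHom.ext fun z => ?_
    obtain ⟨k, hk⟩ := ZMod.intCast_surjective (Multiplicative.toAdd z)
    have hz : z = Multiplicative.ofAdd ((k : ZMod N)) := by rw [hk]; rfl
    rw [MonoidHom.comp_apply, MonoidHom.id_apply, hz, hψ_int, map_zpow, hφx, ← ofAdd_zsmul]
    congr 1
    rw [zsmul_eq_mul]
    push_cast
    ring

end Stmt6Aux

theorem stmt_6 (b c : ℤ) :
    Nonempty (G1 b c ≃* Multiplicative (ZMod (b * c + b + c).natAbs)) ∧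
      (Subsingleton (G1 b c) ↔ b * c + b + c = 1 ∨ b * c + b + c = -1) := by
  have e := Stmt6Aux.theEquiv (b := b) (c := c)
  refine ⟨⟨e⟩, ?_⟩
  have h1 : Subsingleton (G1 b c) ↔
      Subsingleton (Multiplicative (ZMod (b * c + b + c).natAbs)) :=
    Equiv.subsingleton_congr e.toEquiv
  have h2 : Subsingleton (Multiplicative (ZMod (b * c + b + c).natAbs)) ↔
      Subsingleton (ZMod (b * c + b + c).natAbs) := Iff.rfl
  rw [h1, h2, ZMod.subsingleton_iff]
  omega
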